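/- arXiv:2307.13201 — 2 statements merged into one kernel-verified Lean document; each statement's English description precedes it below -/
import Mathlib

section
/- Let C be a Grothendieck category with projective generator G, (U,θ,η) a monad on C with U exact and colimit-preserving, and (M, f_M) a U-module. For every morphism x : G → M in C there exists a U-submodule N_x ⊆ M in EM_U such that |C(G,N_x)| ≤ λ^U and x factors through the inclusion N_x ↪ M. -/
/-!
The submodule `N_x` is the image of the adjoint transpose `x̂ : TG ⟶ M` of `x`. Since `T`
preserves epimorphisms and epimorphisms of an abelian category are strong, `T` applied to the
epimorphism `TG ↠ im x̂` lifts against the monomorphism `im x̂ ↪ M`; the lift is an algebra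
structure on `im x̂`. Projectivity of `G` makes `C(G, TG) → C(G, im x̂)` surjective, so
`|C(G, N_x)| ≤ |C(G, TG)| ≤ λ^T`.
-/

open CategoryTheory CategoryTheory.Limits Opposite

universe w v u u₂ v₂

namespace Paper

variable {C : Type u} [Category.{v} C]

/-- A partially ordered set `J` is `κ`-directed if every subset of cardinality `< κ`
has an upper bound. -/
def IsKappaDirected (κ : Cardinal.{v}) (J : Type v) [Preorder J] : Prop :=
  ∀ S : Set J, Cardinal.mk S < κ → ∃ j : J, ∀ s ∈ S, s ≤ j

/-- An object `M` is `κ`-presentable if `C(M,-)` preserves colimits of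
`κ`-directed diagrams. -/
def IsPresentable (κ : Cardinal.{v}) (M : C) : Prop :=
  ∀ (J : Type v) [PartialOrder J], IsKappaDirected κ J →
    PreservesColimitsOfShape J (coyoneda.obj (op M))

/-- A category is locally `κ`-presentable if it is cocomplete and has a small
separating family of `κ`-presentable objects. -/
def IsLocallyKappaPresentable (κ : Cardinal.{v₂}) (A : Type u₂) [Category.{v₂} A] : Prop :=
  ∃ (_ : HasColimits A) (S : Set A), Small.{v₂} S ∧ (∀ M ∈ S, IsPresentable κ M) ∧
    ObjectProperty.IsSeparating (fun M => M ∈ S)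

/-- A category is locally presentable if it is locally `κ`-presentable for some
regular cardinal `κ`. -/
def IsLocallyPresentable (A : Type u₂) [Category.{v₂} A] : Prop :=
  ∃ κ : Cardinal.{v₂}, κ.IsRegular ∧ IsLocallyKappaPresentable κ A

/-- Filtered colimits exist when all colimits do. -/
def hasFilteredOfHasColimits {A : Type u₂} [Category.{v₂} A] (hc : HasColimits A) :
    HasFilteredColimits A :=
  ⟨fun I _ _ => hc.has_colimits_of_shape I⟩

/-- A Grothendieck category: abelian, cocomplete, AB5, with a generator. -/
def IsGrothendieckCategory (A : Type u₂) [Category.{v₂} A] : Prop :=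
  ∃ (_ : Abelian A) (hc : HasColimits A),
    @AB5 A _ (hasFilteredOfHasColimits hc) ∧ ∃ G : A, IsSeparator G

section MonadQuiver

variable {Q : Type v} [SmallCategory Q] (𝒰 : Q ⥤ Monad C)

/-- A module over a monad quiver `𝒰 : Q ⥤ Mnd(C)`: a family of Eilenberg-Moore
algebras `pt x ∈ EM_{𝒰 x}` together with compatible structure morphisms
`pt x ⟶ (𝒰 φ)_* (pt y)` for each arrow `φ : x ⟶ y`. -/
structure UMod where
  pt : ∀ x : Q, (𝒰.obj x).Algebra
  tr : ∀ {x y : Q}, (x ⟶ y) → ((pt x).A ⟶ (pt y).A)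
  compat : ∀ {x y : Q} (φ : x ⟶ y),
    (𝒰.obj x).toFunctor.map (tr φ) ≫ ((𝒰.map φ).app (pt y).A ≫ (pt y).a) =
      (pt x).a ≫ tr φ
  tr_id : ∀ x : Q, tr (𝟙 x) = 𝟙 (pt x).A
  tr_comp : ∀ {x y z : Q} (φ : x ⟶ y) (ψ : y ⟶ z), tr (φ ≫ ψ) = tr φ ≫ tr ψ

variable {𝒰}

/-- Morphisms of modules over a monad quiver. -/
structure UModHom (M N : UMod 𝒰) where
  app : ∀ x : Q, (M.pt x).A ⟶ (N.pt x).A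
  halg : ∀ x : Q,
    (𝒰.obj x).toFunctor.map (app x) ≫ (N.pt x).a = (M.pt x).a ≫ app x
  hcomm : ∀ {x y : Q} (φ : x ⟶ y), M.tr φ ≫ app y = app x ≫ N.tr φ

theorem UModHom.ext' {M N : UMod 𝒰} {f g : UModHom M N} (h : f.app = g.app) : f = g := by
  cases f; cases g; cases h; rfl

instance : Category (UMod 𝒰) where
  Hom := UModHom
  id M :=
    { app := fun x => 𝟙 _
      halg := fun x => by simp
      hcomm := fun φ => by simp }
  comp {M N P} f g :=
    { app := fun x => f.app x ≫ g.app x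
      halg := fun x => by
        rw [Functor.map_comp, Category.assoc, g.halg x, ← Category.assoc, f.halg x,
          Category.assoc]
      hcomm := fun φ => by
        rw [← Category.assoc, f.hcomm φ, Category.assoc, g.hcomm φ, ← Category.assoc] }
  id_comp f := UModHom.ext' (by funext x; exact Category.id_comp _)
  comp_id f := UModHom.ext' (by funext x; exact Category.comp_id _)
  assoc f g h := UModHom.ext' (by funext x; exact Category.assoc _ _ _)

variable (𝒰)

/-- Evaluation of a `𝒰`-module at a vertex `x`. -/
def ev (x : Q) : UMod 𝒰 ⥤ (𝒰.obj x).Algebra where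
  obj M := M.pt x
  map f := { f := f.app x, h := f.halg x }
  map_id _ := rfl
  map_comp _ _ := rfl

variable {𝒰}

/-- The structure morphism of a module, as a morphism `pt x ⟶ φ_* (pt y)` of
Eilenberg-Moore algebras. -/
def UMod.trHom (M : UMod 𝒰) {x y : Q} (φ : x ⟶ y) :
    M.pt x ⟶ (Monad.algebraFunctorOfMonadHom (𝒰.map φ)).obj (M.pt y) :=
  { f := M.tr φ
    h := M.compat φ }

/-- `M` is cartesian at the edge `φ : x ⟶ y` if the structure morphism
`pt x ⟶ φ_* (pt y)` is a universal arrow; equivalently the adjoint transpose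
`φ^* (pt x) ⟶ pt y` is an isomorphism. -/
def IsCartesianAt (M : UMod 𝒰) {x y : Q} (φ : x ⟶ y) : Prop :=
  ∀ (N : (𝒰.obj y).Algebra) (g : M.pt x ⟶ (Monad.algebraFunctorOfMonadHom (𝒰.map φ)).obj N),
    ∃! h : M.pt y ⟶ N,
      M.trHom φ ≫ (Monad.algebraFunctorOfMonadHom (𝒰.map φ)).map h = g

end MonadQuiver

/-- `P` together with `η : M ⟶ φ_* P` is a reflection of `M` along restriction of
scalars, i.e. `η` exhibits `P` as `φ^* M`. -/
def IsExtension {T₁ T₂ : Monad C} (φ : T₁ ⟶ T₂) (M : T₁.Algebra) (P : T₂.Algebra)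
    (η : M ⟶ (Monad.algebraFunctorOfMonadHom φ).obj P) : Prop :=
  ∀ (N : T₂.Algebra) (g : M ⟶ (Monad.algebraFunctorOfMonadHom φ).obj N),
    ∃! h : P ⟶ N, η ≫ (Monad.algebraFunctorOfMonadHom φ).map h = g

/-- A monad morphism `φ` is flat if the left adjoint `φ^*` of the restriction
functor `φ_*` is exact. -/
def IsFlatMonadHom {T₁ T₂ : Monad C} (φ : T₁ ⟶ T₂) : Prop :=
  ∀ (L : T₁.Algebra ⥤ T₂.Algebra),
    Nonempty (L ⊣ Monad.algebraFunctorOfMonadHom φ) → PreservesFiniteLimits L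

end Paper

namespace CategoryTheory.Monad.Algebra.Hom

variable {C : Type*} [Category C] [HasStrongEpiMonoFactorisations C]
  {T : Monad C} {X M : T.Algebra} (g : X ⟶ M)

theorem image_commSq :
    CommSq (X.a ≫ factorThruImage g.f) (T.map (factorThruImage g.f)) (image.ι g.f)
      (T.map (image.ι g.f) ≫ M.a) :=
  ⟨by rw [Category.assoc, image.fac, ← g.h, ← Functor.map_comp_assoc, image.fac]⟩

variable [StrongEpiCategory C] [T.PreservesEpimorphisms]

instance : StrongEpi (T.map (Limits.factorThruImage g.f)) := strongEpi_of_epi _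

noncomputable def image : T.Algebra where
  A := Limits.image g.f
  a := (image_commSq g).lift
  unit := by
    rw [← cancel_mono (image.ι g.f), Category.assoc, (image_commSq g).fac_right,
      ← T.η.naturality_assoc, Functor.id_map, M.unit]
    simp
  assoc := by
    rw [← cancel_mono (image.ι g.f), Category.assoc, Category.assoc, (image_commSq g).fac_right,
      ← Functor.map_comp_assoc, (image_commSq g).fac_right, Functor.map_comp_assoc, ← M.assoc,
      ← T.μ.naturality_assoc, Functor.comp_map]

noncomputable def imageι : image g ⟶ M where
  f := image.ι g.f
  h := (image_commSq g).fac_right.symm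

instance : Mono (imageι g) :=
  T.forget.mono_of_mono_map (inferInstanceAs (Mono (image.ι g.f)))

noncomputable def factorThruImage : X ⟶ image g where
  f := Limits.factorThruImage g.f
  h := (image_commSq g).fac_left

instance : Epi (factorThruImage g).f :=
  inferInstanceAs (Epi (Limits.factorThruImage g.f))

@[simp]
theorem factorThruImage_comp_imageι : factorThruImage g ≫ imageι g = g :=
  Algebra.Hom.ext (image.fac g.f)

end CategoryTheory.Monad.Algebra.Hom

theorem CategoryTheory.Projective.mk_hom_le_of_epi {C : Type*} [Category C] (P : C) [Projective P]
    {E X : C} (e : E ⟶ X) [Epi e] : Cardinal.mk (P ⟶ X) ≤ Cardinal.mk (P ⟶ E) :=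
  Cardinal.mk_le_of_surjective fun f => Projective.factors f e

theorem Cardinal.le_power_mul_power_self (a : Cardinal) {κ : Cardinal} (hκ : κ ≠ 0) :
    a ≤ a ^ κ * κ ^ κ :=
  (a.self_le_power (Cardinal.one_le_iff_ne_zero.mpr hκ)).trans
    (le_mul_right (power_ne_zero _ hκ))

namespace Paper

theorem exists_small_submodule_of_element_general {C : Type u} [Category.{v} C]
    [Abelian C]
    (G : C) (hGp : Projective G)
    (κG : Cardinal.{v}) (hreg : κG.IsRegular)
    (T : Monad C) [PreservesColimits T.toFunctor]
    (M : T.Algebra) (x : G ⟶ M.A) :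
    ∃ (N : T.Algebra) (i : N ⟶ M), Mono i ∧
      Cardinal.mk (G ⟶ N.A) ≤ Cardinal.mk (G ⟶ T.toFunctor.obj G) ^ κG * κG ^ κG ∧
      ∃ x' : G ⟶ N.A, x' ≫ i.f = x := by
  let g : T.free.obj G ⟶ M := (T.adj.homEquiv G M).symm x
  refine ⟨g.image, g.imageι, inferInstance, ?_, T.adj.homEquiv G _ g.factorThruImage, ?_⟩
  · exact (Projective.mk_hom_le_of_epi G g.factorThruImage.f).trans
      (Cardinal.le_power_mul_power_self _ hreg.pos.ne')
  · refine (T.adj.homEquiv_naturality_right g.factorThruImage g.imageι).symm.trans ?_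
    rw [Monad.Algebra.Hom.factorThruImage_comp_imageι]
    exact (T.adj.homEquiv G M).apply_symm_apply x

/-- every element `x : G ⟶ M` of a `U`-module `M` is contained in a
submodule `N_x ⊆ M` of norm at most `λ^U` (Proposition 3.4). -/
theorem exists_small_submodule_of_element {C : Type u} [Category.{v} C]
    [Abelian C] [HasColimits C] [AB5 C]
    (G : C) (hG : IsSeparator G) (hGp : Projective G)
    (κG : Cardinal.{v}) (hreg : κG.IsRegular) (hpres : IsPresentable κG G)
    (T : Monad C) [PreservesFiniteLimits T.toFunctor] [PreservesColimits T.toFunctor]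
    (M : T.Algebra) (x : G ⟶ M.A) :
    ∃ (N : T.Algebra) (i : N ⟶ M), Mono i ∧
      Cardinal.mk (G ⟶ N.A) ≤ Cardinal.mk (G ⟶ T.toFunctor.obj G) ^ κG * κG ^ κG ∧
      ∃ x' : G ⟶ N.A, x' ≫ i.f = x :=
  exists_small_submodule_of_element_general G hGp κG hreg T M x

end Paper
end

section
/- Let Q be a poset and 𝒰 : Q → Mnd(C) a monad quiver valued in exact colimit-preserving monads, and x ∈ Q. Define coe_x : EM_{𝒰_x} → Mod-𝒰 by (coe_x M)_y = ψ_* M if there is ψ ∈ Q(y,x), and 0 otherwise. Then coe_x is right adjoint to the evaluation functor ev_x : Mod-𝒰 → EM_{𝒰_x}. -/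
open CategoryTheory CategoryTheory.Limits Opposite

universe w v u u₂ v₂

/-!
On the down-set of `x`, `coe_x M` is `ψ_* M` and every structure map is the identity of the
carrier of `M`, since `ρ_* = φ_* ψ_*` holds on the nose; off the down-set it is the zero
algebra, which is a zero object because the monads preserve the terminal object `0`.
A morphism `M' ⟶ coe_x M` is determined by its component at `x`: compatibility with the
structure map along `y ≤ x` forces the component at `y` to be `M'_y ⟶ ψ_* M'_x ⟶ ψ_* M`, and
off the down-set there is no choice. This is a bijection `(M'_x ⟶ M) ≃ (M' ⟶ coe_x M)`
natural in `M'`, which is all `Adjunction.rightAdjointOfEquiv` needs.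
-/

open ZeroObject

namespace CategoryTheory.Monad

variable {C : Type u} [Category.{v} C] [HasZeroObject C]

noncomputable def zeroAlgebra (T : Monad C) : T.Algebra where
  A := 0
  a := (isZero_zero C).from_ _
  unit := (isZero_zero C).eq_of_tgt _ _
  assoc := (isZero_zero C).eq_of_tgt _ _

theorem isZero_zeroAlgebra {T : Monad C} (hT : IsZero (T.obj 0)) : IsZero T.zeroAlgebra where
  unique_to N := ⟨{
    default := { f := (isZero_zero C).to_ N.A, h := hT.eq_of_src _ _ }
    uniq := fun _ => Algebra.Hom.ext ((isZero_zero C).eq_of_src _ _) }⟩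
  unique_from N := ⟨{
    default := { f := (isZero_zero C).from_ N.A, h := (isZero_zero C).eq_of_tgt _ _ }
    uniq := fun _ => Algebra.Hom.ext ((isZero_zero C).eq_of_tgt _ _) }⟩

end CategoryTheory.Monad

namespace Paper

variable {C : Type u} [Category.{v} C]

section Coe

variable {Q : Type v} [PartialOrder Q] (𝒰 : Q ⥤ Monad C)

abbrev res {y x : Q} (h : y ≤ x) : (𝒰.obj x).Algebra ⥤ (𝒰.obj y).Algebra :=
  Monad.algebraFunctorOfMonadHom (𝒰.map (homOfLE h))

variable [HasZeroObject C] (x : Q)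

open Classical in
noncomputable def coeAlgebra (M : (𝒰.obj x).Algebra) (y : Q) : (𝒰.obj y).Algebra :=
  if h : y ≤ x then (res 𝒰 h).obj M else (𝒰.obj y).zeroAlgebra

variable {𝒰 x}

noncomputable def coeAlgebraIso (M : (𝒰.obj x).Algebra) {y : Q} (h : y ≤ x) :
    coeAlgebra 𝒰 x M y ≅ (res 𝒰 h).obj M :=
  eqToIso (dif_pos h)

/-- Typed with target `M.A` rather than `((res 𝒰 h).obj M).A`, so that these isomorphisms for
different `y` compose syntactically and `simp` can cancel them. -/
noncomputable def coeIso (M : (𝒰.obj x).Algebra) {y : Q} (h : y ≤ x) :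
    (coeAlgebra 𝒰 x M y).A ≅ M.A :=
  (Monad.forget _).mapIso (coeAlgebraIso M h)

theorem coeAlgebra_a (M : (𝒰.obj x).Algebra) {y : Q} (h : y ≤ x) :
    (coeAlgebra 𝒰 x M y).a =
      (𝒰.obj y).map (coeIso M h).hom ≫ (𝒰.map (homOfLE h)).app M.A ≫ M.a ≫ (coeIso M h).inv := by
  rw [← cancel_mono (coeIso M h).hom]
  simp only [Category.assoc, Iso.inv_hom_id, Category.comp_id]
  exact ((coeAlgebraIso M h).hom.h).symm

theorem isZero_coeAlgebra_A (M : (𝒰.obj x).Algebra) {y : Q} (h : ¬ y ≤ x) :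
    IsZero (coeAlgebra 𝒰 x M y).A := by
  rw [coeAlgebra, dif_neg h]
  exact isZero_zero C

theorem isZero_coeAlgebra (M : (𝒰.obj x).Algebra) {y : Q} (h : ¬ y ≤ x)
    (hT : IsZero ((𝒰.obj y).obj 0)) : IsZero (coeAlgebra 𝒰 x M y) := by
  rw [coeAlgebra, dif_neg h]
  exact Monad.isZero_zeroAlgebra hT

open Classical in
noncomputable def coeTr (M : (𝒰.obj x).Algebra) {y z : Q} (φ : y ⟶ z) :
    (coeAlgebra 𝒰 x M y).A ⟶ (coeAlgebra 𝒰 x M z).A :=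
  if hz : z ≤ x then (coeIso M ((leOfHom φ).trans hz)).hom ≫ (coeIso M hz).inv
  else (isZero_coeAlgebra_A M hz).from_ _

theorem coeTr_of_le (M : (𝒰.obj x).Algebra) {y z : Q} (φ : y ⟶ z) (hz : z ≤ x) :
    coeTr M φ = (coeIso M ((leOfHom φ).trans hz)).hom ≫ (coeIso M hz).inv :=
  dif_pos hz

theorem coeTr_compat (M : (𝒰.obj x).Algebra) {y z : Q} (φ : y ⟶ z) :
    (𝒰.obj y).map (coeTr M φ) ≫ (𝒰.map φ).app _ ≫ (coeAlgebra 𝒰 x M z).a =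
      (coeAlgebra 𝒰 x M y).a ≫ coeTr M φ := by
  by_cases hz : z ≤ x
  · have hφ : homOfLE ((leOfHom φ).trans hz) = φ ≫ homOfLE hz := rfl
    simp [coeTr_of_le M φ hz, coeAlgebra_a M hz, coeAlgebra_a M ((leOfHom φ).trans hz), hφ]
  · exact (isZero_coeAlgebra_A M hz).eq_of_tgt _ _

variable (𝒰 x) in
noncomputable abbrev coeMod (M : (𝒰.obj x).Algebra) : UMod 𝒰 where
  pt := coeAlgebra 𝒰 x M
  tr := coeTr M
  compat := coeTr_compat M
  tr_id y := by
    by_cases hy : y ≤ x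
    · simp [coeTr_of_le M _ hy]
    · exact (isZero_coeAlgebra_A M hy).eq_of_tgt _ _
  tr_comp {_ _ w} φ ψ := by
    by_cases hw : w ≤ x
    · simp [coeTr_of_le M _ hw, coeTr_of_le M φ ((leOfHom ψ).trans hw)]
    · exact (isZero_coeAlgebra_A M hw).eq_of_tgt _ _

variable {M' : UMod 𝒰} {M : (𝒰.obj x).Algebra}

open Classical in
noncomputable def coeTransposeApp (g : M'.pt x ⟶ M) (y : Q) :
    (M'.pt y).A ⟶ (coeAlgebra 𝒰 x M y).A :=
  if hy : y ≤ x then (M'.trHom (homOfLE hy) ≫ (res 𝒰 hy).map g ≫ (coeAlgebraIso M hy).inv).f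
  else (isZero_coeAlgebra_A M hy).from_ _

theorem coeTransposeApp_of_le (g : M'.pt x ⟶ M) {y : Q} (hy : y ≤ x) :
    coeTransposeApp g y = M'.tr (homOfLE hy) ≫ g.f ≫ (coeIso M hy).inv :=
  dif_pos hy

noncomputable def coeTranspose (g : M'.pt x ⟶ M) : M' ⟶ coeMod 𝒰 x M where
  app := coeTransposeApp g
  halg y := by
    by_cases hy : y ≤ x
    · rw [coeTransposeApp, dif_pos hy]
      exact (M'.trHom (homOfLE hy) ≫ (res 𝒰 hy).map g ≫ (coeAlgebraIso M hy).inv).h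
    · exact (isZero_coeAlgebra_A M hy).eq_of_tgt _ _
  hcomm {y z} φ := by
    by_cases hz : z ≤ x
    · have hy := (leOfHom φ).trans hz
      have htr : M'.tr φ ≫ M'.tr (homOfLE hz) = M'.tr (homOfLE hy) := (M'.tr_comp _ _).symm
      change M'.tr φ ≫ coeTransposeApp g z = coeTransposeApp g y ≫ coeTr M φ
      simp [coeTransposeApp_of_le g hz, coeTransposeApp_of_le g hy, coeTr_of_le M φ hz,
        reassoc_of% htr]
    · exact (isZero_coeAlgebra_A M hz).eq_of_tgt _ _

noncomputable def coeUntranspose (h : M' ⟶ coeMod 𝒰 x M) : M'.pt x ⟶ M where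
  f := h.app x ≫ (coeIso M le_rfl).hom
  h := by
    have := h.halg x
    rw [coeAlgebra_a M le_rfl] at this
    simpa using this =≫ (coeIso M le_rfl).hom

@[simp]
theorem coeUntranspose_f (h : M' ⟶ coeMod 𝒰 x M) :
    (coeUntranspose h).f = h.app x ≫ (coeIso M le_rfl).hom := rfl

variable (x M' M) in
noncomputable def coeHomEquiv : (M'.pt x ⟶ M) ≃ (M' ⟶ coeMod 𝒰 x M) where
  toFun := coeTranspose
  invFun := coeUntranspose
  left_inv g := by
    ext
    simp [coeTranspose, coeTransposeApp_of_le g le_rfl, M'.tr_id]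
  right_inv h := by
    apply UModHom.ext'
    funext y
    by_cases hy : y ≤ x
    · change coeTransposeApp _ y = h.app y
      have hcomm : M'.tr (homOfLE hy) ≫ h.app x = h.app y ≫ coeTr M (homOfLE hy) := h.hcomm _
      rw [coeTr_of_le M _ le_rfl] at hcomm
      simp [coeTransposeApp_of_le _ hy, reassoc_of% hcomm]
    · exact (isZero_coeAlgebra_A M hy).eq_of_tgt _ _

theorem coeTranspose_ev_map_comp {M'' : UMod 𝒰} (f : M'' ⟶ M') (g : M'.pt x ⟶ M) :
    coeTranspose ((ev 𝒰 x).map f ≫ g) = f ≫ coeTranspose g := by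
  apply UModHom.ext'
  funext y
  by_cases hy : y ≤ x
  · change coeTransposeApp ((ev 𝒰 x).map f ≫ g) y = f.app y ≫ coeTransposeApp g y
    simp [coeTransposeApp_of_le _ hy, ev, reassoc_of% (f.hcomm (homOfLE hy))]
  · exact (isZero_coeAlgebra_A M hy).eq_of_tgt _ _

variable (𝒰 x)

noncomputable def coeFunctor : (𝒰.obj x).Algebra ⥤ UMod 𝒰 :=
  Adjunction.rightAdjointOfEquiv (F := ev 𝒰 x) (G_obj := coeMod 𝒰 x) (coeHomEquiv x)
    fun _ _ _ => coeTranspose_ev_map_comp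

noncomputable def evCoeAdjunction : ev 𝒰 x ⊣ coeFunctor 𝒰 x :=
  Adjunction.adjunctionOfEquivRight _ _

end Coe

theorem exists_right_adjoint_of_ev_general {C : Type u} [Category.{v} C]
    [Abelian C]
    {Q : Type v} [PartialOrder Q] (𝒰 : Q ⥤ Monad C)
    (hU : ∀ x : Q,
      PreservesFiniteLimits (𝒰.obj x).toFunctor ∧ PreservesColimits (𝒰.obj x).toFunctor)
    (x : Q) :
    ∃ (R : (𝒰.obj x).Algebra ⥤ UMod 𝒰), Nonempty (ev 𝒰 x ⊣ R) ∧
      ∀ (M : (𝒰.obj x).Algebra) (y : Q),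
        (¬ y ≤ x → IsZero ((R.obj M).pt y)) ∧
        ∀ h : y ≤ x,
          Nonempty ((R.obj M).pt y ≅
            (Monad.algebraFunctorOfMonadHom (𝒰.map (homOfLE h))).obj M) := by
  refine ⟨coeFunctor 𝒰 x, ⟨evCoeAdjunction 𝒰 x⟩, fun M y => ⟨fun hy => ?_, fun hy => ?_⟩⟩
  · have := (hU y).1
    exact isZero_coeAlgebra M hy (Functor.map_isZero _ (isZero_zero C))
  · exact ⟨coeAlgebraIso M hy⟩

/-- for a poset `Q`, the evaluation functor `ev_x` admits a right
adjoint `coe_x` which vanishes outside the downset of `x` and is given by the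
restriction `ψ_*` on it (Proposition 5.2). -/
theorem exists_right_adjoint_of_ev {C : Type u} [Category.{v} C]
    [Abelian C] [HasColimits C] [AB5 C]
    (G : C) (hG : IsSeparator G) (hGp : Projective G)
    {Q : Type v} [PartialOrder Q] (𝒰 : Q ⥤ Monad C)
    (hU : ∀ x : Q,
      PreservesFiniteLimits (𝒰.obj x).toFunctor ∧ PreservesColimits (𝒰.obj x).toFunctor)
    (x : Q) :
    ∃ (R : (𝒰.obj x).Algebra ⥤ UMod 𝒰), Nonempty (ev 𝒰 x ⊣ R) ∧
      ∀ (M : (𝒰.obj x).Algebra) (y : Q),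
        (¬ y ≤ x → IsZero ((R.obj M).pt y)) ∧
        ∀ h : y ≤ x,
          Nonempty ((R.obj M).pt y ≅
            (Monad.algebraFunctorOfMonadHom (𝒰.map (homOfLE h))).obj M) :=
  exists_right_adjoint_of_ev_general 𝒰 hU x

end Paper
end
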